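/- For three distinct k-dimensional subspaces F1, F2, F3 of C^4 (where 1 ≤ k ≤ 3), there exists a subspace F4 of C^4 such that F4 ⊕ F1 = C^4, F4 ⊕ F2 = C^4, and F4 ∩ F3 has positive dimension. -/

import Mathlib

/-!
Pick `v ∈ F3` outside `F1 ∪ F2`; this is possible because no subspace is the union of two
proper subspaces. The line `ℂ ∙ v` is disjoint from `F1` and `F2`, and a subspace disjoint from
two subspaces of the same dimension can be enlarged one vector at a time, each new vector
avoiding `G ⊔ F1` and `G ⊔ F2`, until it is a common complement of both.
-/

open Module

namespace Submodule

theorem exists_mem_notMem_notMem_of_not_le {R M : Type*} [Ring R] [AddCommGroup M]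
    [Module R M] {p q r : Submodule R M} (hq : ¬ p ≤ q) (hr : ¬ p ≤ r) :
    ∃ x ∈ p, x ∉ q ∧ x ∉ r := by
  obtain ⟨a, hap, haq⟩ := SetLike.not_le_iff_exists.mp hq
  obtain ⟨b, hbp, hbr⟩ := SetLike.not_le_iff_exists.mp hr
  by_cases har : a ∈ r
  · by_cases hbq : b ∈ q
    · refine ⟨a + b, p.add_mem hap hbp, fun h => haq ?_, fun h => hbr ?_⟩
      · simpa using q.sub_mem h hbq
      · simpa using r.sub_mem h har
    · exact ⟨b, hbp, hbq, hbr⟩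
  · exact ⟨a, hap, haq, har⟩

variable {K V : Type*} [Field K] [AddCommGroup V] [Module K V] [FiniteDimensional K V]

theorem sup_ne_top_of_finrank_add_lt {G F : Submodule K V}
    (h : finrank K G + finrank K F < finrank K V) : G ⊔ F ≠ ⊤ := fun htop => by
  have := finrank_add_le_finrank_add_finrank G F
  rw [htop, finrank_top] at this
  omega

theorem exists_finrank_succ_disjoint_disjoint {G F₁ F₂ : Submodule K V}
    (hF : finrank K F₁ = finrank K F₂) (h₁ : Disjoint G F₁) (h₂ : Disjoint G F₂)
    (hlt : finrank K G + finrank K F₁ < finrank K V) :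
    ∃ G', G ≤ G' ∧ finrank K G' = finrank K G + 1 ∧
      Disjoint G' F₁ ∧ Disjoint G' F₂ := by
  obtain ⟨w, -, hw₁, hw₂⟩ := exists_mem_notMem_notMem_of_not_le
    (p := ⊤) (top_le_iff.not.mpr (sup_ne_top_of_finrank_add_lt hlt))
    (top_le_iff.not.mpr <| sup_ne_top_of_finrank_add_lt (hF ▸ hlt))
  have hwG : w ∉ G := fun h => hw₁ (mem_sup_left h)
  -- modularity: `F` meets neither `G` nor the line `K ∙ w` inside `G ⊔ F`
  have hdisj {F : Submodule K V} (hG : Disjoint G F) (hw : w ∉ G ⊔ F) :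
      Disjoint (G ⊔ K ∙ w) F :=
    (hG.symm.disjoint_sup_right_of_disjoint_sup_left
      (sup_comm F G ▸ disjoint_span_singleton_of_notMem hw)).symm
  exact ⟨G ⊔ K ∙ w, le_sup_left, finrank_sup_span_singleton hwG, hdisj h₁ hw₁,
    hdisj h₂ hw₂⟩

theorem exists_le_isCompl_isCompl {G F₁ F₂ : Submodule K V}
    (hF : finrank K F₁ = finrank K F₂) (h₁ : Disjoint G F₁) (h₂ : Disjoint G F₂) :
    ∃ G', G ≤ G' ∧ IsCompl G' F₁ ∧ IsCompl G' F₂ := by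
  induction hn : finrank K V - (finrank K G + finrank K F₁) generalizing G with
  | zero =>
    refine ⟨G, le_rfl, (isCompl_iff_disjoint _ _ ?_).mpr h₁,
      (isCompl_iff_disjoint _ _ ?_).mpr h₂⟩ <;> omega
  | succ n ih =>
    obtain ⟨G', hGG', hG', h₁', h₂'⟩ :=
      exists_finrank_succ_disjoint_disjoint hF h₁ h₂ (by omega)
    obtain ⟨G'', hG'G'', hc₁, hc₂⟩ := ih h₁' h₂' (by omega)
    exact ⟨G'', hGG'.trans hG'G'', hc₁, hc₂⟩

theorem exists_isCompl_isCompl_inf_ne_bot {F₁ F₂ F₃ : Submodule K V}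
    (hF : finrank K F₁ = finrank K F₂) (h₁ : ¬ F₃ ≤ F₁) (h₂ : ¬ F₃ ≤ F₂) :
    ∃ F₄, IsCompl F₄ F₁ ∧ IsCompl F₄ F₂ ∧ F₄ ⊓ F₃ ≠ ⊥ := by
  obtain ⟨v, hv₃, hv₁, hv₂⟩ := exists_mem_notMem_notMem_of_not_le h₁ h₂
  obtain ⟨F₄, hvF₄, hc₁, hc₂⟩ := exists_le_isCompl_isCompl hF
    (disjoint_span_singleton_of_notMem hv₁).symm (disjoint_span_singleton_of_notMem hv₂).symm
  have hv : v ∈ F₄ ⊓ F₃ := ⟨hvF₄ (mem_span_singleton_self v), hv₃⟩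
  exact ⟨F₄, hc₁, hc₂,
    (Submodule.ne_bot_iff _).mpr ⟨v, hv, fun h₀ => hv₁ (h₀ ▸ F₁.zero_mem)⟩⟩

end Submodule

theorem exists_common_complement_meeting_third_general
    (k : ℕ)
    (F1 F2 F3 : Submodule ℂ (Fin 4 → ℂ))
    (h1 : finrank ℂ F1 = k) (h2 : finrank ℂ F2 = k) (h3 : finrank ℂ F3 = k)
    (h13 : F1 ≠ F3) (h23 : F2 ≠ F3) :
    ∃ F4 : Submodule ℂ (Fin 4 → ℂ),
      IsCompl F4 F1 ∧ IsCompl F4 F2 ∧ 0 < finrank ℂ ↥(F4 ⊓ F3) := by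
  have hn1 : ¬ F3 ≤ F1 := fun h =>
    h13 (Submodule.eq_of_le_of_finrank_eq h (h3.trans h1.symm)).symm
  have hn2 : ¬ F3 ≤ F2 := fun h =>
    h23 (Submodule.eq_of_le_of_finrank_eq h (h3.trans h2.symm)).symm
  obtain ⟨F4, hc1, hc2, hne⟩ :=
    Submodule.exists_isCompl_isCompl_inf_ne_bot (h1.trans h2.symm) hn1 hn2
  exact ⟨F4, hc1, hc2, Submodule.one_le_finrank_iff.mpr hne⟩

/-- For three distinct `k`-dimensional subspaces `F1, F2, F3` of `ℂ⁴` (`1 ≤ k ≤ 3`),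
there exists a subspace `F4` complementary to both `F1` and `F2` such that
`F4 ⊓ F3` has positive dimension. -/
theorem exists_common_complement_meeting_third
    (k : ℕ) (hk1 : 1 ≤ k) (hk3 : k ≤ 3)
    (F1 F2 F3 : Submodule ℂ (Fin 4 → ℂ))
    (h1 : finrank ℂ F1 = k) (h2 : finrank ℂ F2 = k) (h3 : finrank ℂ F3 = k)
    (h12 : F1 ≠ F2) (h13 : F1 ≠ F3) (h23 : F2 ≠ F3) :
    ∃ F4 : Submodule ℂ (Fin 4 → ℂ),
      IsCompl F4 F1 ∧ IsCompl F4 F2 ∧ 0 < finrank ℂ ↥(F4 ⊓ F3) :=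
  exists_common_complement_meeting_third_general k F1 F2 F3 h1 h2 h3 h13 h23
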